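/- Let Σ be a symmetric p×p matrix with eigenvalues λ₁ ≥ ... ≥ λ_p and λ_k > λ_{k+1}, and let Π = Σ_{i=1}^k u_i u_iᵀ be the projector onto the top-k eigenspace. Then for every matrix X in the Fantope F^k, (1/2)‖Π − X‖_F² ≤ ⟨Σ, Π − X⟩ / (λ_k − λ_{k+1}). -/

import Mathlib

open Matrix BigOperators Finset

noncomputable def fip {p : ℕ} (A B : Matrix (Fin p) (Fin p) ℝ) : ℝ := (Aᵀ * B).trace

noncomputable def fnorm {p : ℕ} (A : Matrix (Fin p) (Fin p) ℝ) : ℝ :=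
  Real.sqrt (∑ i, ∑ j, (A i j) ^ 2)

def Fantope {p : ℕ} (k : ℕ) (X : Matrix (Fin p) (Fin p) ℝ) : Prop :=
  X.IsSymm ∧ X.PosSemidef ∧ (1 - X).PosSemidef ∧ X.trace = (k : ℝ)

/-- The orthogonal projector onto the span of the top-`k` eigenvectors. -/
def topProj {p : ℕ} (k : ℕ) (u : Fin p → Fin p → ℝ) : Matrix (Fin p) (Fin p) ℝ :=
  ∑ i ∈ Finset.univ.filter (fun i : Fin p => (i : ℕ) < k), vecMulVec (u i) (u i)

/-! With `x i = u iᵀ X u i ∈ [0, 1]` and `∑ i, x i = k`, both sides are governed by the deficit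
`S = k - ∑_{i<k} x i = ∑_{i≥k} x i`. Since `0 ⪯ X ⪯ I` gives `tr X² ≤ tr X = k`,
`‖Π - X‖² = k - 2 tr(Π X) + tr X² ≤ 2 S`; and
`⟨Σ, Π - X⟩ = ∑_{i<k} λ_i (1 - x i) - ∑_{i≥k} λ_i x i ≥ (λ_k - λ_{k+1}) S`. -/

section Orthonormal

variable {ι n R : Type*} [CommSemiring R]

def orthoProj (s : Finset ι) (u : ι → n → R) : Matrix n n R :=
  ∑ i ∈ s, vecMulVec (u i) (u i)

lemma orthoProj_transpose (s : Finset ι) (u : ι → n → R) :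
    (orthoProj s u)ᵀ = orthoProj s u := by
  simp only [orthoProj, transpose_sum, transpose_vecMulVec]

variable [Fintype n]

lemma Matrix.trace_vecMulVec_mul (v w : n → R) (M : Matrix n n R) :
    (vecMulVec v w * M).trace = w ⬝ᵥ M *ᵥ v := by
  rw [vecMulVec_mul, trace_vecMulVec, dotProduct_comm, dotProduct_mulVec]

lemma trace_orthoProj_mul (s : Finset ι) (u : ι → n → R) (M : Matrix n n R) :
    (orthoProj s u * M).trace = ∑ i ∈ s, u i ⬝ᵥ M *ᵥ u i := by
  simp only [orthoProj, sum_mul, trace_sum, trace_vecMulVec_mul]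

variable [DecidableEq ι] (s : Finset ι) {u : ι → n → R}

lemma orthoProj_mulVec (horth : ∀ i j, u i ⬝ᵥ u j = if i = j then 1 else 0) (i : ι) :
    orthoProj s u *ᵥ u i = if i ∈ s then u i else 0 := by
  simp only [orthoProj, sum_mulVec, vecMulVec_mulVec, op_smul_eq_smul, horth, ite_smul,
    one_smul, zero_smul, sum_ite_eq']

lemma dotProduct_orthoProj_mulVec (horth : ∀ i j, u i ⬝ᵥ u j = if i = j then 1 else 0)
    (i : ι) : u i ⬝ᵥ orthoProj s u *ᵥ u i = if i ∈ s then 1 else 0 := by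
  rw [orthoProj_mulVec s horth, apply_ite (u i ⬝ᵥ ·), horth, if_pos rfl, dotProduct_zero]

lemma orthoProj_mul_self (horth : ∀ i j, u i ⬝ᵥ u j = if i = j then 1 else 0) :
    orthoProj s u * orthoProj s u = orthoProj s u := by
  refine (mul_sum _ _ _).trans (sum_congr rfl fun i hi => ?_)
  rw [mul_vecMulVec, orthoProj_mulVec s horth, if_pos hi]

lemma trace_orthoProj (horth : ∀ i j, u i ⬝ᵥ u j = if i = j then 1 else 0) :
    (orthoProj s u).trace = s.card := by
  simp [orthoProj, trace_sum, horth]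

end Orthonormal

lemma orthoProj_univ {n R : Type*} [Fintype n] [DecidableEq n] [CommRing R] {u : n → n → R}
    (horth : ∀ i j, u i ⬝ᵥ u j = if i = j then 1 else 0) :
    orthoProj univ u = 1 := by
  have hrows : of u * (of u)ᵀ = 1 := by
    ext i j
    simpa [mul_apply, one_apply, dotProduct] using horth i j
  rw [← mul_eq_one_comm.mp hrows]
  ext a b
  simp [orthoProj, Matrix.sum_apply, mul_apply, vecMulVec_apply]

open scoped MatrixOrder ComplexOrder in
lemma Matrix.PosSemidef.trace_mul_nonneg {n 𝕜 : Type*} [Fintype n] [DecidableEq n] [RCLike 𝕜]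
    {A B : Matrix n n 𝕜} (hA : A.PosSemidef) (hB : B.PosSemidef) :
    0 ≤ (A * B).trace := by
  set S := CFC.sqrt A
  have hS : Sᴴ = S := (CFC.sqrt_nonneg A).posSemidef.1
  have hSS : S * S = A := by rw [← sq]; exact CFC.sq_sqrt A hA.nonneg
  have hconj : (A * B).trace = (Sᴴ * B * S).trace := by
    rw [hS, ← hSS, Matrix.mul_assoc, trace_mul_comm]
  exact hconj ▸ (hB.conjTranspose_mul_mul_same S).trace_nonneg

lemma fnorm_sq {p : ℕ} (A : Matrix (Fin p) (Fin p) ℝ) : fnorm A ^ 2 = (Aᵀ * A).trace := by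
  rw [fnorm, Real.sq_sqrt (by positivity), trace, sum_comm]
  simp [mul_apply, sq]

namespace Fantope

variable {p k : ℕ} {X : Matrix (Fin p) (Fin p) ℝ}

lemma trace_mul_self_le (hX : Fantope k X) : (X * X).trace ≤ k := by
  have := hX.2.1.trace_mul_nonneg hX.2.2.1
  rw [Matrix.mul_sub, mul_one, trace_sub, hX.2.2.2] at this
  exact sub_nonneg.1 this

lemma dotProduct_mulVec_mem_Icc (hX : Fantope k X) {v : Fin p → ℝ} (hv : v ⬝ᵥ v = 1) :
    v ⬝ᵥ X *ᵥ v ∈ Set.Icc 0 1 := by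
  have h := hX.2.2.1.dotProduct_mulVec_nonneg v
  simp only [star_trivial, sub_mulVec, one_mulVec, dotProduct_sub, hv, sub_nonneg] at h
  exact ⟨by simpa using hX.2.1.dotProduct_mulVec_nonneg v, h⟩

lemma fnorm_sub_sq_le {P : Matrix (Fin p) (Fin p) ℝ} (hX : Fantope k X) (hPsymm : Pᵀ = P)
    (hPidem : P * P = P) (hPtr : P.trace = k) :
    fnorm (P - X) ^ 2 ≤ 2 * (k - (P * X).trace) := by
  have hXsymm : Xᵀ = X := hX.1
  have := hX.trace_mul_self_le
  rw [fnorm_sq, transpose_sub, hPsymm, hXsymm, sub_mul, mul_sub, mul_sub, trace_sub, trace_sub,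
    trace_sub, hPidem, hPtr, trace_mul_comm X P]
  linarith

end Fantope

lemma gap_mul_le_sum_mul_sub {ι : Type*} [Fintype ι] [DecidableEq ι] (s : Finset ι)
    {l x : ι → ℝ} {a b : ℝ} (hs : ∀ i ∈ s, a ≤ l i) (hsc : ∀ i ∉ s, l i ≤ b)
    (hx0 : ∀ i, 0 ≤ x i) (hx1 : ∀ i, x i ≤ 1) (hsum : ∑ i, x i = s.card) :
    (a - b) * (s.card - ∑ i ∈ s, x i) ≤ ∑ i, l i * ((if i ∈ s then 1 else 0) - x i) := by
  have hdeficit : ∑ i ∈ s, (1 - x i) = s.card - ∑ i ∈ s, x i := by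
    simp [sum_sub_distrib]
  have hin : a * (s.card - ∑ i ∈ s, x i) ≤ ∑ i ∈ s, l i * (1 - x i) := by
    rw [← hdeficit, mul_sum]
    exact sum_le_sum fun i hi => mul_le_mul_of_nonneg_right (hs i hi) (sub_nonneg.2 (hx1 i))
  have hout : ∑ i ∈ sᶜ, l i * x i ≤ b * (s.card - ∑ i ∈ s, x i) := by
    rw [show (s.card : ℝ) - ∑ i ∈ s, x i = ∑ i ∈ sᶜ, x i by linarith [sum_add_sum_compl s x], mul_sum]
    exact sum_le_sum fun i hi =>
      mul_le_mul_of_nonneg_right (hsc i (mem_compl.1 hi)) (hx0 i)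
  have hrhs : ∑ i, l i * ((if i ∈ s then 1 else 0) - x i) =
      ∑ i ∈ s, l i * (1 - x i) - ∑ i ∈ sᶜ, l i * x i := by
    rw [← sum_add_sum_compl s, sub_eq_add_neg, ← sum_neg_distrib]
    congr 1 <;> refine sum_congr rfl fun i hi => ?_
    · rw [if_pos hi]
    · rw [if_neg (mem_compl.1 hi)]; ring
  linarith

lemma fip_sum_smul_vecMulVec {p : ℕ} {ι : Type*} (s : Finset ι) (l : ι → ℝ)
    (u : ι → Fin p → ℝ) (M : Matrix (Fin p) (Fin p) ℝ) :
    fip (∑ i ∈ s, l i • vecMulVec (u i) (u i)) M = ∑ i ∈ s, l i * (u i ⬝ᵥ M *ᵥ u i) := by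
  simp only [fip, transpose_sum, transpose_smul, transpose_vecMulVec, sum_mul, trace_sum,
    smul_mul, trace_smul, trace_vecMulVec_mul, smul_eq_mul]

/-- curvature lemma.  If λ_k > λ_{k+1} and Π = ∑_{i≤k} u_i u_iᵀ is the
projector onto the top-k eigenspace, then for every X in the Fantope,
(1/2)‖Π − X‖_F² ≤ ⟨Σ, Π − X⟩ / (λ_k − λ_{k+1}). -/
theorem fantope_curvature (p k : ℕ) (hkp : k < p)
    (Sig : Matrix (Fin p) (Fin p) ℝ) (l : Fin p → ℝ) (u : Fin p → Fin p → ℝ)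
    (hdecomp : Sig = ∑ i, l i • vecMulVec (u i) (u i))
    (horth : ∀ i j, u i ⬝ᵥ u j = if i = j then (1 : ℝ) else 0)
    (hl : Antitone l)
    (hgap : l ⟨k, hkp⟩ < l ⟨k - 1, by omega⟩) :
    ∀ X : Matrix (Fin p) (Fin p) ℝ, Fantope k X →
      (1 / 2) * fnorm (topProj k u - X) ^ 2 ≤
        fip Sig (topProj k u - X) / (l ⟨k - 1, by omega⟩ - l ⟨k, hkp⟩) := by
  intro X hX
  set T : Finset (Fin p) := univ.filter fun i => (i : ℕ) < k
  have hP : topProj k u = orthoProj T u := rfl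
  have hcard : (T.card : ℝ) = k := by simp [T, Fin.card_filter_val_lt, hkp.le]
  have hdiag (i : Fin p) : u i ⬝ᵥ X *ᵥ u i ∈ Set.Icc 0 1 :=
    hX.dotProduct_mulVec_mem_Icc (by simp [horth])
  have hsum : ∑ i, u i ⬝ᵥ X *ᵥ u i = T.card := by
    rw [hcard, ← trace_orthoProj_mul, orthoProj_univ horth, one_mul, hX.2.2.2]
  have hnorm : fnorm (topProj k u - X) ^ 2 ≤ 2 * (T.card - ∑ i ∈ T, u i ⬝ᵥ X *ᵥ u i) := by
    rw [hP, hcard, ← trace_orthoProj_mul]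
    exact hX.fnorm_sub_sq_le (orthoProj_transpose T u) (orthoProj_mul_self T horth)
      (by rw [trace_orthoProj T horth, hcard])
  have hfip : fip Sig (topProj k u - X) =
      ∑ i, l i * ((if i ∈ T then 1 else 0) - u i ⬝ᵥ X *ᵥ u i) := by
    simp only [hdecomp, fip_sum_smul_vecMulVec, hP, sub_mulVec, dotProduct_sub,
      dotProduct_orthoProj_mulVec T horth]
  have hbound := gap_mul_le_sum_mul_sub T (l := l) (x := fun i => u i ⬝ᵥ X *ᵥ u i)
    (a := l ⟨k - 1, by omega⟩) (b := l ⟨k, hkp⟩)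
    (fun i hi => hl (Fin.le_iff_val_le_val.2 (by simp [T] at hi; simp; omega)))
    (fun i hi => hl (Fin.mk_le_of_le_val (by simpa [T] using hi)))
    (fun i => (hdiag i).1) (fun i => (hdiag i).2) hsum
  have hgap_pos := sub_pos.2 hgap
  rw [le_div_iff₀ hgap_pos, hfip]
  calc 1 / 2 * fnorm (topProj k u - X) ^ 2 * (l ⟨k - 1, by omega⟩ - l ⟨k, hkp⟩)
      ≤ (T.card - ∑ i ∈ T, u i ⬝ᵥ X *ᵥ u i) * (l ⟨k - 1, by omega⟩ - l ⟨k, hkp⟩) := by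
        gcongr; linarith
    _ ≤ _ := by rw [mul_comm]; exact hbound
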